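/- arXiv:2402.03066 — 2 statements merged into one kernel-verified Lean document; each statement's English description precedes it below -/
import Mathlib

section
/- The two 5×5 symmetric matrices C^(1) = [[0,1,1,3,3],[1,2,2,3,4],[1,2,3,3,4],[3,3,3,4,4],[3,4,4,4,5]] and C^(2) = [[0,1,1,3,3],[1,2,2,3,3],[1,2,3,4,4],[3,3,4,4,4],[3,3,4,4,5]] yield identical generating functions: for all r ≥ 0, Σ_{e_1+...+e_5=r} (q;q)_r / Π_i (q;q)_{e_i} · (-1)^{e_3+e_5} a^{2e_1+2e_2+3e_3+2e_4+3e_5} q^{-2e_1-e_3+e_5+2e_4} q^{-(2e_2+3e_3+4e_4+5e_5)/2} q^{(Σ_{i,j} C^(1)_{ij} e_i e_j)/2} equals the same sum with C^(2) in place of C^(1). -/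
open Finset

/-- q-Pochhammer symbol `(x;q)_n = ∏_{j=0}^{n-1} (1 - x q^j)`. -/
noncomputable def qPoch {K : Type*} [Field K] (q x : K) (n : ℕ) : K :=
  ∏ j ∈ Finset.range n, (1 - x * q ^ j)

/-- The first quiver matrix for the knot `5₁`. -/
def C1 : Matrix (Fin 5) (Fin 5) ℕ :=
  !![0,1,1,3,3; 1,2,2,3,4; 1,2,3,3,4; 3,3,3,4,4; 3,4,4,4,5]

/-- The second quiver matrix for the knot `5₁`. -/
def C2 : Matrix (Fin 5) (Fin 5) ℕ :=
  !![0,1,1,3,3; 1,2,2,3,3; 1,2,3,4,4; 3,3,4,4,4; 3,3,4,4,5]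

/-- The summand of the quiver generating series for a quiver matrix `C`,
with `s = q^{1/2}`. -/
noncomputable def quiverTerm {K : Type*} [Field K] (a s q : K) (r : ℕ)
    (C : Matrix (Fin 5) (Fin 5) ℕ) (e : Fin 5 → ℕ) : K :=
  qPoch q q r / (∏ i, qPoch q q (e i)) *
    (-1) ^ (e 2 + e 4) *
    a ^ (2 * e 0 + 2 * e 1 + 3 * e 2 + 2 * e 3 + 3 * e 4) *
    q ^ (e 4 + 2 * e 3) * (q ^ (2 * e 0 + e 2))⁻¹ *
    (s ^ (2 * e 1 + 3 * e 2 + 4 * e 3 + 5 * e 4))⁻¹ *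
    s ^ (∑ i, ∑ j, C i j * e i * e j)

section
variable {K : Type*} [Field K] (q : K)

lemma qPoch_zero : qPoch q q 0 = 1 := by simp [qPoch]

lemma qPoch_succ (n : ℕ) : qPoch q q (n+1) = qPoch q q n * (1 - q ^ (n+1)) := by
  rw [qPoch, Finset.prod_range_succ, ← pow_succ']
  rfl

lemma qPoch_ne_zero (hq : ∀ n : ℕ, 1 ≤ n → q ^ n ≠ 1) (n : ℕ) : qPoch q q n ≠ 0 := by
  induction n with
  | zero => simp [qPoch_zero]
  | succ k ih =>
    rw [qPoch_succ]
    refine mul_ne_zero ih (sub_ne_zero.mpr ?_)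
    exact fun h => hq (k+1) (by omega) h.symm

/-- Gaussian binomial as a quotient of Pochhammers. -/
noncomputable def gb (m k : ℕ) : K :=
  if k ≤ m then qPoch q q m / (qPoch q q k * qPoch q q (m - k)) else 0

variable (hq : ∀ n : ℕ, 1 ≤ n → q ^ n ≠ 1)
include hq

lemma gb_zero_right (m : ℕ) : gb q m 0 = 1 := by
  rw [gb, if_pos (Nat.zero_le m)]
  simp [qPoch_zero]
  exact qPoch_ne_zero q hq m

lemma gb_self (m : ℕ) : gb q m m = 1 := by
  rw [gb, if_pos le_rfl]
  simp [qPoch_zero]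
  exact qPoch_ne_zero q hq m

lemma gb_of_gt {m k : ℕ} (h : m < k) : gb q m k = 0 := by
  rw [gb, if_neg (by omega)]

lemma gb_pascal (n k : ℕ) :
    gb q (n+1) (k+1) = gb q n k + q ^ (k+1) * gb q n (k+1) := by
  rcases le_or_gt (k+1) n with h | h
  · have hk : k ≤ n := by omega
    rw [gb, if_pos (by omega), gb, if_pos hk, gb, if_pos h]
    have hnz := qPoch_ne_zero q hq
    have h1 : n + 1 - (k + 1) = n - k := by omega
    have h2 : n - k = (n - (k+1)) + 1 := by omega
    have e1 : (1:K) - q ^ (n+1) = (1 - q^(k+1)) + q^(k+1) * (1 - q^(n - (k+1) + 1)) := by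
      have : q^(k+1) * q^(n-(k+1)+1) = q^(n+1) := by
        rw [← pow_add]; congr 1; omega
      rw [mul_sub, this]; ring
    rw [h1, qPoch_succ q n, h2, qPoch_succ q (n - (k+1)), qPoch_succ q k, e1]
    have hb : (1:K) - q^(k+1) ≠ 0 := fun h => hq (k+1) (by omega) (by linear_combination -h)
    have hc : (1:K) - q^(n-(k+1)+1) ≠ 0 :=
      fun h => hq (n-(k+1)+1) (by omega) (by linear_combination -h)
    have hB := hnz k
    have hC := hnz (n - (k+1))
    generalize qPoch q q n = A
    generalize hBB : qPoch q q k = B at hB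
    generalize hCC : qPoch q q (n - (k+1)) = Cc at hC
    generalize (1:K) - q^(k+1) = b at hb
    generalize (1:K) - q^(n-(k+1)+1) = c at hc
    field_simp
  · rcases Nat.eq_or_lt_of_le (by omega : n ≤ k) with rfl | h2
    · rw [gb_self q hq, gb_self q hq, gb_of_gt q hq (by omega)]
      ring
    · rw [gb_of_gt q hq (by omega), gb_of_gt q hq (by omega), gb_of_gt q hq (by omega)]
      ring

end

section
variable {K : Type*} [Field K] (q : K)

/-- One-variable sum `G(N, w) = ∑_k [N,k] q^{-Nk} w^k`. -/
noncomputable def Gfun (w : K) (N : ℕ) : K :=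
  ∑ k ∈ range (N+1), gb q N k * (q ^ (N*k))⁻¹ * w ^ k

variable (hq0 : q ≠ 0) (hq : ∀ n : ℕ, 1 ≤ n → q ^ n ≠ 1)

include hq0 in
lemma pow_inv_split (a b : ℕ) : (q ^ (a + b))⁻¹ = (q ^ a)⁻¹ * (q ^ b)⁻¹ := by
  rw [pow_add, mul_inv]

include hq0 in
lemma pow_cancel (a : ℕ) : q ^ a * (q ^ a)⁻¹ = 1 :=
  mul_inv_cancel₀ (pow_ne_zero _ hq0)

include hq0 hq

lemma Gfun_succ (N : ℕ) (w : K) :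
    Gfun q w (N+1) = Gfun q w N + w * (q ^ (N+1))⁻¹ * Gfun q (w * q⁻¹) N := by
  rw [Gfun, Finset.sum_range_succ' _ (N+1)]
  have h0 : gb q (N+1) 0 * (q ^ ((N+1)*0))⁻¹ * w ^ 0 = gb q N 0 * (q^(N*0))⁻¹ * w^0 := by
    rw [gb_zero_right q hq, gb_zero_right q hq]; norm_num
  rw [h0]
  have hsplit : ∀ k ∈ range (N+1),
      gb q (N+1) (k+1) * (q ^ ((N+1)*(k+1)))⁻¹ * w ^ (k+1)
      = gb q N k * (q^(N*k))⁻¹ * (w*q⁻¹)^k * (w * (q^(N+1))⁻¹)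
        + gb q N (k+1) * (q^(N*(k+1)))⁻¹ * w^(k+1) := by
    intro k _
    rw [gb_pascal q hq]
    have hinv1 : (q ^ ((N+1)*(k+1)))⁻¹ = (q^(N*k))⁻¹ * (q^k)⁻¹ * (q^(N+1))⁻¹ := by
      rw [show (N+1)*(k+1) = (N*k + k) + (N+1) from by ring,
        pow_inv_split q hq0 (N*k+k) (N+1), pow_inv_split q hq0 (N*k) k]
    have hinv2 : (q ^ ((N+1)*(k+1)))⁻¹ = (q^(k+1))⁻¹ * (q^(N*(k+1)))⁻¹ := by
      rw [show (N+1)*(k+1) = (k+1) + N*(k+1) from by ring,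
        pow_inv_split q hq0 (k+1) (N*(k+1))]
    rw [add_mul, add_mul, mul_pow w q⁻¹ k, inv_pow]
    congr 1
    · rw [hinv1]; ring
    · rw [hinv2]
      linear_combination (gb q N (k+1) * (q^(N*(k+1)))⁻¹ * w^(k+1)) * pow_cancel q hq0 (k+1)
  rw [Finset.sum_congr rfl hsplit, Finset.sum_add_distrib, ← Finset.sum_mul]
  have hlast : gb q N (N+1) * (q^(N*(N+1)))⁻¹ * w^(N+1) = 0 := by
    rw [gb_of_gt q hq (Nat.lt_succ_self _)]; ring
  have hthis : ∑ k ∈ range (N+1), gb q N (k+1) * (q^(N*(k+1)))⁻¹ * w^(k+1)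
      = ∑ k ∈ range N, gb q N (k+1) * (q^(N*(k+1)))⁻¹ * w^(k+1) := by
    rw [Finset.sum_range_succ, hlast, add_zero]
  rw [hthis, Gfun, Gfun,
    Finset.sum_range_succ' (fun k => gb q N k * (q^(N*k))⁻¹ * w^k) N,
    Finset.sum_range_succ' (fun k => gb q N k * (q^(N*k))⁻¹ * (w*q⁻¹)^k) N]
  simp only [mul_pow w q⁻¹, inv_pow]
  ring

lemma key_lemma (m : ℕ) : ∀ (n : ℕ) (w : K),
    ∑ x ∈ range (m+1), ∑ y ∈ range (n+1),
      gb q m x * gb q n y * (q ^ (m*x + m*y + n*y + x*y))⁻¹ * w ^ (x+y)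
    = Gfun q w (m+n) := by
  intro n
  induction n with
  | zero =>
    intro w
    simp only [Nat.add_zero]
    rw [Gfun]
    refine Finset.sum_congr rfl fun x _ => ?_
    rw [Finset.sum_range_one, gb_zero_right q hq]
    norm_num
  | succ n ih =>
    intro w
    have step : ∀ x ∈ range (m+1),
        ∑ y ∈ range (n+2), gb q m x * gb q (n+1) y * (q ^ (m*x + m*y + (n+1)*y + x*y))⁻¹ * w ^ (x+y)
        = (∑ y ∈ range (n+1), gb q m x * gb q n y * (q ^ (m*x + m*y + n*y + x*y))⁻¹ * w ^ (x+y))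
          + (∑ z ∈ range (n+1), gb q m x * gb q n z * (q ^ (m*x + m*z + n*z + x*z))⁻¹ * (w*q⁻¹) ^ (x+z))
            * (w * (q ^ (m+n+1))⁻¹) := by
      intro x hx
      rw [Finset.sum_range_succ' _ (n+1)]
      have hsplit : ∀ z ∈ range (n+1),
          gb q m x * gb q (n+1) (z+1) * (q ^ (m*x + m*(z+1) + (n+1)*(z+1) + x*(z+1)))⁻¹ * w ^ (x+(z+1))
          = gb q m x * gb q n z * (q ^ (m*x + m*z + n*z + x*z))⁻¹ * (w*q⁻¹) ^ (x+z) * (w * (q ^ (m+n+1))⁻¹)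
            + gb q m x * gb q n (z+1) * (q ^ (m*x + m*(z+1) + n*(z+1) + x*(z+1)))⁻¹ * w ^ (x+(z+1)) := by
        intro z _
        rw [gb_pascal q hq]
        have hinv1 : (q ^ (m*x + m*(z+1) + (n+1)*(z+1) + x*(z+1)))⁻¹
            = (q^(m*x + m*z + n*z + x*z))⁻¹ * (q^(x+z))⁻¹ * (q^(m+n+1))⁻¹ := by
          rw [show m*x + m*(z+1) + (n+1)*(z+1) + x*(z+1)
              = ((m*x + m*z + n*z + x*z) + (x+z)) + (m+n+1) from by ring,
            pow_inv_split q hq0 ((m*x + m*z + n*z + x*z) + (x+z)) (m+n+1),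
            pow_inv_split q hq0 (m*x + m*z + n*z + x*z) (x+z)]
        have hinv2 : (q ^ (m*x + m*(z+1) + (n+1)*(z+1) + x*(z+1)))⁻¹
            = (q^(z+1))⁻¹ * (q^(m*x + m*(z+1) + n*(z+1) + x*(z+1)))⁻¹ := by
          rw [show m*x + m*(z+1) + (n+1)*(z+1) + x*(z+1)
              = (z+1) + (m*x + m*(z+1) + n*(z+1) + x*(z+1)) from by ring,
            pow_inv_split q hq0 (z+1) (m*x + m*(z+1) + n*(z+1) + x*(z+1))]
        rw [mul_add, add_mul, add_mul]
        congr 1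
        · rw [hinv1, mul_pow w q⁻¹ (x+z), inv_pow,
            show x + (z+1) = (x+z) + 1 from by ring, pow_succ w (x+z)]
          ring
        · rw [hinv2]
          linear_combination (gb q m x * gb q n (z+1)
            * (q^(m*x + m*(z+1) + n*(z+1) + x*(z+1)))⁻¹ * w^(x+(z+1))) * pow_cancel q hq0 (z+1)
      rw [Finset.sum_congr rfl hsplit, Finset.sum_add_distrib, ← Finset.sum_mul]
      have hlast : gb q m x * gb q n (n+1) * (q^(m*x + m*(n+1) + n*(n+1) + x*(n+1)))⁻¹ * w^(x+(n+1)) = 0 := by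
        rw [gb_of_gt q hq (Nat.lt_succ_self _)]; ring
      have hre : ∑ z ∈ range (n+1), gb q m x * gb q n (z+1) * (q^(m*x + m*(z+1) + n*(z+1) + x*(z+1)))⁻¹ * w^(x+(z+1))
          = ∑ y ∈ range n, gb q m x * gb q n (y+1) * (q^(m*x + m*(y+1) + n*(y+1) + x*(y+1)))⁻¹ * w^(x+(y+1)) := by
        rw [Finset.sum_range_succ, hlast, add_zero]
      have h0 : gb q m x * gb q (n+1) 0 * (q ^ (m*x + m*0 + (n+1)*0 + x*0))⁻¹ * w ^ (x+0)
          = gb q m x * gb q n 0 * (q ^ (m*x + m*0 + n*0 + x*0))⁻¹ * w ^ (x+0) := by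
        rw [gb_zero_right q hq, gb_zero_right q hq]; norm_num
      rw [hre, h0, Finset.sum_range_succ' (fun y => gb q m x * gb q n y * (q ^ (m*x + m*y + n*y + x*y))⁻¹ * w ^ (x+y)) n]
      ring
    rw [Finset.sum_congr rfl step, Finset.sum_add_distrib, ← Finset.sum_mul, ih w, ih (w*q⁻¹)]
    rw [show m + (n+1) = (m+n) + 1 from by ring, Gfun_succ q hq0 hq]
    ring

end

section
variable {K : Type*} [Field K] (q : K) (hq0 : q ≠ 0) (hq : ∀ n : ℕ, 1 ≤ n → q ^ n ≠ 1)
include hq0 hq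

lemma fiber_lemma (c m n : ℕ) :
    ∑ x ∈ range (m+1), ∑ y ∈ range (n+1),
      (qPoch q q x * qPoch q q (m-x) * qPoch q q y * qPoch q q (n-y))⁻¹ *
        (q ^ ((2*c+m+1)*x + (2*c+m+n+1)*y + x*y))⁻¹
    = (qPoch q q m * qPoch q q n)⁻¹ * Gfun q ((q^(2*c+1))⁻¹) (m+n) := by
  rw [← key_lemma q hq0 hq m n ((q^(2*c+1))⁻¹), Finset.mul_sum]
  refine Finset.sum_congr rfl fun x hx => ?_
  rw [Finset.mul_sum]
  refine Finset.sum_congr rfl fun y hy => ?_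
  have hxm : x ≤ m := by simpa [Nat.lt_succ_iff] using hx
  have hyn : y ≤ n := by simpa [Nat.lt_succ_iff] using hy
  have hgbx : gb q m x = qPoch q q m / (qPoch q q x * qPoch q q (m-x)) := by
    rw [gb, if_pos hxm]
  have hgby : gb q n y = qPoch q q n / (qPoch q q y * qPoch q q (n-y)) := by
    rw [gb, if_pos hyn]
  have hw : ((q^(2*c+1))⁻¹) ^ (x+y) = (q ^ ((2*c+1)*(x+y)))⁻¹ := by
    rw [inv_pow, ← pow_mul]
  have hexp : (q ^ ((2*c+m+1)*x + (2*c+m+n+1)*y + x*y))⁻¹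
      = (q ^ (m*x + m*y + n*y + x*y))⁻¹ * (q ^ ((2*c+1)*(x+y)))⁻¹ := by
    rw [show (2*c+m+1)*x + (2*c+m+n+1)*y + x*y
        = (m*x + m*y + n*y + x*y) + (2*c+1)*(x+y) from by ring,
      pow_inv_split q hq0]
  rw [hgbx, hgby, hw, hexp]
  have h1 := qPoch_ne_zero q hq x
  have h2 := qPoch_ne_zero q hq (m-x)
  have h3 := qPoch_ne_zero q hq y
  have h4 := qPoch_ne_zero q hq (n-y)
  have h5 := qPoch_ne_zero q hq m
  have h6 := qPoch_ne_zero q hq n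
  field_simp

lemma fiber_symm (c m n : ℕ) :
    ∑ x ∈ range (m+1), ∑ y ∈ range (n+1),
      (qPoch q q x * qPoch q q (m-x) * qPoch q q y * qPoch q q (n-y))⁻¹ *
        (q ^ ((2*c+m+1)*x + (2*c+m+n+1)*y + x*y))⁻¹
    = ∑ x ∈ range (m+1), ∑ y ∈ range (n+1),
      (qPoch q q x * qPoch q q (m-x) * qPoch q q y * qPoch q q (n-y))⁻¹ *
        (q ^ ((2*c+m+n+1)*x + (2*c+n+1)*y + x*y))⁻¹ := by
  rw [fiber_lemma q hq0 hq c m n]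
  have h2 := fiber_lemma q hq0 hq c n m
  rw [Finset.sum_comm] at h2
  rw [show (qPoch q q m * qPoch q q n)⁻¹ * Gfun q ((q^(2*c+1))⁻¹) (m+n)
      = (qPoch q q n * qPoch q q m)⁻¹ * Gfun q ((q^(2*c+1))⁻¹) (n+m) from by
    rw [mul_comm (qPoch q q m), Nat.add_comm m n]]
  rw [← h2]
  refine Finset.sum_congr rfl fun x hx => Finset.sum_congr rfl fun y hy => ?_
  rw [show (2*c+n+1)*y + (2*c+n+m+1)*x + y*x = (2*c+m+n+1)*x + (2*c+n+1)*y + x*y from by ring]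
  ring

end

lemma zpow_helper {K : Type*} [Field K] {s : K} (hs : s ≠ 0) (n1 n2 n3 n4 X : ℕ) (E : ℤ)
    (h : 2*(n1:ℤ) - 2*(n2:ℤ) - (n3:ℤ) + (n4:ℤ) = E - 2*(X:ℤ)) :
    (s^2)^n1 * ((s^2)^n2)⁻¹ * (s^n3)⁻¹ * s^n4 = s^E * ((s^2)^X)⁻¹ := by
  rw [← pow_mul s 2 n1, ← pow_mul s 2 n2, ← pow_mul s 2 X]
  have key : ∀ k : ℕ, (s:K)^k = s^(k:ℤ) := fun k => (zpow_natCast s k).symm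
  rw [key (2*n1), key (2*n2), key n3, key n4, key (2*X),
    ← zpow_neg, ← zpow_neg, ← zpow_neg,
    ← zpow_add₀ hs, ← zpow_add₀ hs, ← zpow_add₀ hs, ← zpow_add₀ hs]
  have he : ((2*n1:ℕ):ℤ) + -((2*n2:ℕ):ℤ) + -(n3:ℤ) + (n4:ℤ) = E + -((2*X:ℕ):ℤ) := by
    push_cast; linarith
  rw [he]

def Econst (c m n : ℕ) : ℤ :=
  6*(c:ℤ)*m + 6*(c:ℤ)*n + 4*(m:ℤ)^2 + 8*(m:ℤ)*n + 5*(n:ℤ)^2 - 4*(c:ℤ) - 3*(n:ℤ)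

lemma term_C1 {K : Type*} [Field K] (a s : K) (hs : s ≠ 0) (r c m n x y : ℕ)
    (hx : x ≤ m) (hy : y ≤ n) :
    quiverTerm a s (s^2) r C1 ![c,x,y,m-x,n-y]
    = qPoch (s^2) (s^2) r /
        (qPoch (s^2) (s^2) c * qPoch (s^2) (s^2) x * qPoch (s^2) (s^2) y *
          qPoch (s^2) (s^2) (m-x) * qPoch (s^2) (s^2) (n-y)) *
      (-1)^n * a^(2*c+2*m+3*n) *
      (s ^ Econst c m n * ((s^2) ^ ((2*c+m+1)*x + (2*c+m+n+1)*y + x*y))⁻¹) := by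
  simp only [quiverTerm, C1, Fin.sum_univ_five, Fin.prod_univ_five,
    Matrix.cons_val_zero, Matrix.cons_val_one, Matrix.head_cons,
    Matrix.cons_val_two, Matrix.tail_cons, Matrix.cons_val_three, Matrix.cons_val_four,
    Matrix.head_fin_const, Matrix.cons_val', Matrix.of_apply, Matrix.cons_val_fin_one]
  rw [show y + (n-y) = n from by omega,
    show 2*c+2*x+3*y+2*(m-x)+3*(n-y) = 2*c+2*m+3*n from by omega]
  have h := zpow_helper hs (n - y + 2 * (m - x)) (2*c+y)
    (2 * x + 3 * y + 4 * (m - x) + 5 * (n - y))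
    (0 * c * c + 1 * c * x + 1 * c * y + 3 * c * (m - x) + 3 * c * (n - y) +
        (1 * x * c + 2 * x * x + 2 * x * y + 3 * x * (m - x) + 4 * x * (n - y)) +
      (1 * y * c + 2 * y * x + 3 * y * y + 3 * y * (m - x) + 4 * y * (n - y)) +
      (3 * (m - x) * c + 3 * (m - x) * x + 3 * (m - x) * y + 4 * (m - x) * (m - x) +
        4 * (m - x) * (n - y)) +
      (3 * (n - y) * c + 4 * (n - y) * x + 4 * (n - y) * y + 4 * (n - y) * (m - x) +
        5 * (n - y) * (n - y)))
    ((2*c+m+1)*x + (2*c+m+n+1)*y + x*y) (Econst c m n)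
    (by push_cast [Nat.cast_sub hx, Nat.cast_sub hy]; rw [Econst]; push_cast; ring)
  linear_combination (qPoch (s^2) (s^2) r /
        (qPoch (s^2) (s^2) c * qPoch (s^2) (s^2) x * qPoch (s^2) (s^2) y *
          qPoch (s^2) (s^2) (m-x) * qPoch (s^2) (s^2) (n-y)) *
      (-1)^n * a^(2*c+2*m+3*n)) * h

lemma term_C2 {K : Type*} [Field K] (a s : K) (hs : s ≠ 0) (r c m n x y : ℕ)
    (hx : x ≤ m) (hy : y ≤ n) :
    quiverTerm a s (s^2) r C2 ![c,x,y,m-x,n-y]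
    = qPoch (s^2) (s^2) r /
        (qPoch (s^2) (s^2) c * qPoch (s^2) (s^2) x * qPoch (s^2) (s^2) y *
          qPoch (s^2) (s^2) (m-x) * qPoch (s^2) (s^2) (n-y)) *
      (-1)^n * a^(2*c+2*m+3*n) *
      (s ^ Econst c m n * ((s^2) ^ ((2*c+m+n+1)*x + (2*c+n+1)*y + x*y))⁻¹) := by
  simp only [quiverTerm, C2, Fin.sum_univ_five, Fin.prod_univ_five,
    Matrix.cons_val_zero, Matrix.cons_val_one, Matrix.head_cons,
    Matrix.cons_val_two, Matrix.tail_cons, Matrix.cons_val_three, Matrix.cons_val_four,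
    Matrix.head_fin_const, Matrix.cons_val', Matrix.of_apply, Matrix.cons_val_fin_one]
  rw [show y + (n-y) = n from by omega,
    show 2*c+2*x+3*y+2*(m-x)+3*(n-y) = 2*c+2*m+3*n from by omega]
  have h := zpow_helper hs (n - y + 2 * (m - x)) (2*c+y)
    (2 * x + 3 * y + 4 * (m - x) + 5 * (n - y))
    (0 * c * c + 1 * c * x + 1 * c * y + 3 * c * (m - x) + 3 * c * (n - y) +
      (1 * x * c + 2 * x * x + 2 * x * y + 3 * x * (m - x) + 3 * x * (n - y)) +
      (1 * y * c + 2 * y * x + 3 * y * y + 4 * y * (m - x) + 4 * y * (n - y)) +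
      (3 * (m - x) * c + 3 * (m - x) * x + 4 * (m - x) * y + 4 * (m - x) * (m - x) + 4 * (m - x) * (n - y)) +
      (3 * (n - y) * c + 3 * (n - y) * x + 4 * (n - y) * y + 4 * (n - y) * (m - x) + 5 * (n - y) * (n - y)))
    ((2*c+m+n+1)*x + (2*c+n+1)*y + x*y) (Econst c m n)
    (by push_cast [Nat.cast_sub hx, Nat.cast_sub hy]; rw [Econst]; push_cast; ring)
  linear_combination (qPoch (s^2) (s^2) r /
        (qPoch (s^2) (s^2) c * qPoch (s^2) (s^2) x * qPoch (s^2) (s^2) y *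
          qPoch (s^2) (s^2) (m-x) * qPoch (s^2) (s^2) (n-y)) *
      (-1)^n * a^(2*c+2*m+3*n)) * h

/-- The two quiver matrices `C1` and `C2` for the knot `5₁` yield identical
generating functions for every `r ≥ 0`. -/
theorem quiver_nonuniqueness_5_1 {K : Type*} [Field K] (a s q : K)
    (hs : s ^ 2 = q) (hq : ∀ n : ℕ, 1 ≤ n → q ^ n ≠ 1) (r : ℕ) :
    (∑ e ∈ (Fintype.piFinset fun _ : Fin 5 => Finset.range (r + 1)).filter
        (fun e => ∑ i, e i = r), quiverTerm a s q r C1 e) =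
    ∑ e ∈ (Fintype.piFinset fun _ : Fin 5 => Finset.range (r + 1)).filter
        (fun e => ∑ i, e i = r), quiverTerm a s q r C2 e := by
  subst hs
  by_cases hs0 : s = 0
  · -- degenerate case `s = 0` (hence `q = 0`): all nontrivial terms vanish
    subst hs0
    refine Finset.sum_congr rfl fun e he => ?_
    by_cases h : ∀ i, e i = 0
    · have h2 : ∀ C : Matrix (Fin 5) (Fin 5) ℕ, (∑ i, ∑ j, C i j * e i * e j) = 0 := by
        intro C
        refine Finset.sum_eq_zero fun i _ => Finset.sum_eq_zero fun j _ => ?_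
        rw [h j]; ring
      simp [quiverTerm, h2 C1, h2 C2]
    · have h5 : e 0 ≠ 0 ∨ e 1 ≠ 0 ∨ e 2 ≠ 0 ∨ e 3 ≠ 0 ∨ e 4 ≠ 0 := by
        by_contra hc
        push_neg at hc
        exact h fun i => by fin_cases i <;> tauto
      have hzero : ∀ C : Matrix (Fin 5) (Fin 5) ℕ,
          quiverTerm a 0 ((0:K)^2) r C e = 0 := by
        intro C
        by_cases h02 : 2 * e 0 + e 2 = 0
        · have h134 : 2 * e 1 + 3 * e 2 + 4 * e 3 + 5 * e 4 ≠ 0 := by omega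
          simp [quiverTerm, zero_pow h134]
        · simp [quiverTerm, zero_pow h02]
      rw [hzero C1, hzero C2]
  · -- main case: `s ≠ 0`
    have hs2 : (s^2 : K) ≠ 0 := pow_ne_zero _ hs0
    set A := (Fintype.piFinset fun _ : Fin 5 => Finset.range (r + 1)).filter
        (fun e => ∑ i, e i = r) with hA
    have hmap : ∀ e ∈ A, ((e 0, e 1 + e 3, e 2 + e 4) : ℕ × ℕ × ℕ)
        ∈ range (r+1) ×ˢ (range (r+1) ×ˢ range (r+1)) := by
      intro e he
      rw [hA, Finset.mem_filter, Fintype.mem_piFinset] at he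
      obtain ⟨h1, h2⟩ := he
      rw [Fin.sum_univ_five] at h2
      simp only [Finset.mem_product, Finset.mem_range]
      omega
    rw [← Finset.sum_fiberwise_of_maps_to hmap (quiverTerm a s (s^2) r C1),
      ← Finset.sum_fiberwise_of_maps_to hmap (quiverTerm a s (s^2) r C2)]
    refine Finset.sum_congr rfl fun p hp => ?_
    obtain ⟨c, m, n⟩ := p
    by_cases hr : c + m + n = r
    · -- reindex the fiber by `(x, y) = (e 1, e 2)`
      have reindex : ∀ C : Matrix (Fin 5) (Fin 5) ℕ,
          ∑ e ∈ A.filter (fun e => ((e 0, e 1 + e 3, e 2 + e 4) : ℕ × ℕ × ℕ) = (c, m, n)),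
            quiverTerm a s (s^2) r C e
          = ∑ p ∈ range (m+1) ×ˢ range (n+1),
              quiverTerm a s (s^2) r C ![c, p.1, p.2, m - p.1, n - p.2] := by
        intro C
        refine Finset.sum_bij' (fun e _ => ((e 1, e 2) : ℕ × ℕ))
          (fun p _ => ![c, p.1, p.2, m - p.1, n - p.2]) ?_ ?_ ?_ ?_ ?_
        · intro e he
          rw [Finset.mem_filter, hA, Finset.mem_filter] at he
          simp only [Finset.mem_product, Finset.mem_range]
          have := he.2
          rw [Prod.mk.injEq, Prod.mk.injEq] at this
          omega
        · intro p hp2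
          simp only [Finset.mem_product, Finset.mem_range] at hp2
          rw [Finset.mem_filter, hA, Finset.mem_filter, Fintype.mem_piFinset]
          refine ⟨⟨fun i => ?_, ?_⟩, ?_⟩
          · fin_cases i <;> simp <;> omega
          · rw [Fin.sum_univ_five]
            simp only [Matrix.cons_val_zero, Matrix.cons_val_one, Matrix.head_cons,
              Matrix.cons_val_two, Matrix.tail_cons, Matrix.cons_val_three,
              Matrix.cons_val_four]
            omega
          · simp only [Matrix.cons_val_zero, Matrix.cons_val_one, Matrix.head_cons,
              Matrix.cons_val_two, Matrix.tail_cons, Matrix.cons_val_three,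
              Matrix.cons_val_four, Prod.mk.injEq]
            exact ⟨trivial, by omega, by omega⟩
        · intro e he
          rw [Finset.mem_filter, hA, Finset.mem_filter] at he
          have h2 := he.2
          rw [Prod.mk.injEq, Prod.mk.injEq] at h2
          funext i
          fin_cases i <;> simp <;> omega
        · intro p hp2
          simp only [Finset.mem_product, Finset.mem_range] at hp2
          simp only [Matrix.cons_val_one, Matrix.head_cons, Matrix.cons_val_two,
            Matrix.tail_cons, Matrix.cons_val_zero]
        · intro e he
          rw [Finset.mem_filter, hA, Finset.mem_filter] at he
          have h2 := he.2
          rw [Prod.mk.injEq, Prod.mk.injEq] at h2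
          congr 1
          funext i
          fin_cases i <;> simp <;> omega
      rw [reindex C1, reindex C2, Finset.sum_product, Finset.sum_product]
      have hx' : ∀ x ∈ range (m+1), x ≤ m := fun x hx => by
        simpa [Nat.lt_succ_iff] using hx
      have hy' : ∀ y ∈ range (n+1), y ≤ n := fun y hy => by
        simpa [Nat.lt_succ_iff] using hy
      have hterm1 : ∀ x ∈ range (m+1), ∀ y ∈ range (n+1),
          quiverTerm a s (s^2) r C1 ![c, x, y, m - x, n - y]
          = (qPoch (s^2) (s^2) r * (qPoch (s^2) (s^2) c)⁻¹ * (-1)^n * a^(2*c+2*m+3*n)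
              * s ^ Econst c m n)
            * ((qPoch (s^2) (s^2) x * qPoch (s^2) (s^2) (m-x) * qPoch (s^2) (s^2) y
                * qPoch (s^2) (s^2) (n-y))⁻¹
              * ((s^2) ^ ((2*c+m+1)*x + (2*c+m+n+1)*y + x*y))⁻¹) := by
        intro x hx y hy
        rw [term_C1 a s hs0 r c m n x y (hx' x hx) (hy' y hy), div_eq_mul_inv,
          mul_inv, mul_inv, mul_inv, mul_inv]
        ring
      have hterm2 : ∀ x ∈ range (m+1), ∀ y ∈ range (n+1),
          quiverTerm a s (s^2) r C2 ![c, x, y, m - x, n - y]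
          = (qPoch (s^2) (s^2) r * (qPoch (s^2) (s^2) c)⁻¹ * (-1)^n * a^(2*c+2*m+3*n)
              * s ^ Econst c m n)
            * ((qPoch (s^2) (s^2) x * qPoch (s^2) (s^2) (m-x) * qPoch (s^2) (s^2) y
                * qPoch (s^2) (s^2) (n-y))⁻¹
              * ((s^2) ^ ((2*c+m+n+1)*x + (2*c+n+1)*y + x*y))⁻¹) := by
        intro x hx y hy
        rw [term_C2 a s hs0 r c m n x y (hx' x hx) (hy' y hy), div_eq_mul_inv,
          mul_inv, mul_inv, mul_inv, mul_inv]
        ring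
      calc ∑ x ∈ range (m+1), ∑ y ∈ range (n+1),
              quiverTerm a s (s^2) r C1 ![c, x, y, m - x, n - y]
          = (qPoch (s^2) (s^2) r * (qPoch (s^2) (s^2) c)⁻¹ * (-1)^n * a^(2*c+2*m+3*n)
              * s ^ Econst c m n)
            * ∑ x ∈ range (m+1), ∑ y ∈ range (n+1),
              ((qPoch (s^2) (s^2) x * qPoch (s^2) (s^2) (m-x) * qPoch (s^2) (s^2) y
                * qPoch (s^2) (s^2) (n-y))⁻¹
              * ((s^2) ^ ((2*c+m+1)*x + (2*c+m+n+1)*y + x*y))⁻¹) := by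
            rw [Finset.mul_sum]
            refine Finset.sum_congr rfl fun x hx => ?_
            rw [Finset.mul_sum]
            exact Finset.sum_congr rfl fun y hy => hterm1 x hx y hy
        _ = (qPoch (s^2) (s^2) r * (qPoch (s^2) (s^2) c)⁻¹ * (-1)^n * a^(2*c+2*m+3*n)
              * s ^ Econst c m n)
            * ∑ x ∈ range (m+1), ∑ y ∈ range (n+1),
              ((qPoch (s^2) (s^2) x * qPoch (s^2) (s^2) (m-x) * qPoch (s^2) (s^2) y
                * qPoch (s^2) (s^2) (n-y))⁻¹
              * ((s^2) ^ ((2*c+m+n+1)*x + (2*c+n+1)*y + x*y))⁻¹) := by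
            rw [fiber_symm (s^2) hs2 hq c m n]
        _ = ∑ x ∈ range (m+1), ∑ y ∈ range (n+1),
              quiverTerm a s (s^2) r C2 ![c, x, y, m - x, n - y] := by
            rw [Finset.mul_sum]
            refine Finset.sum_congr rfl fun x hx => ?_
            rw [Finset.mul_sum]
            exact Finset.sum_congr rfl fun y hy => (hterm2 x hx y hy).symm
    · -- empty fiber
      have hempty : A.filter
          (fun e => ((e 0, e 1 + e 3, e 2 + e 4) : ℕ × ℕ × ℕ) = (c, m, n)) = ∅ := by
        refine Finset.eq_empty_of_forall_notMem fun e he => ?_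
        rw [Finset.mem_filter, hA, Finset.mem_filter] at he
        have h1 := he.1.2
        have h2 := he.2
        rw [Fin.sum_univ_five] at h1
        rw [Prod.mk.injEq, Prod.mk.injEq] at h2
        omega
      rw [hempty, Finset.sum_empty, Finset.sum_empty]
end

section
/- Define HP(q;o)_m as above and D_i = 1 + a q^{-i} t^{3-2i} Q^{-1}. Then HP(q;o)_m ≡ q^{m(m+1)/2} t^{m²} Π_{ℓ=1}^{m} D_{1+ℓ-m-o} modulo D_{1-m-o}, i.e., HP(q;o)_m − q^{m(m+1)/2} t^{m²} Π_{ℓ=1}^{m} D_{1+ℓ-m-o} is divisible by D_{1-m-o} in the Laurent polynomial ring. -/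
open Finset

/-- The Laurent polynomial ring `ℤ[a^{±1}, q^{±1}, t^{±1}, Q^{±1}]`, realized as the
group algebra of `ℤ⁴` over `ℤ`; variable `0` is `a`, `1` is `q`, `2` is `t`, `3` is `Q`. -/
abbrev LaurentRing := AddMonoidAlgebra ℤ (Fin 4 →₀ ℤ)

/-- The monomial `a^w q^x t^y Q^z`. -/
noncomputable def mon (w x y z : ℤ) : LaurentRing :=
  AddMonoidAlgebra.single
    (Finsupp.single 0 w + Finsupp.single 1 x + Finsupp.single 2 y + Finsupp.single 3 z) 1

/-- The Gaussian binomial coefficient `[m choose i]_s` as a polynomial expression in `s`,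
defined via the q-Pascal recursion. -/
def qbinom {R : Type*} [CommRing R] (s : R) : ℕ → ℕ → R
  | _, 0 => 1
  | 0, _ + 1 => 0
  | m + 1, i + 1 => qbinom s m i + s ^ (i + 1) * qbinom s m (i + 1)

/-- `HP(q;o)_m = Σ_{i=0}^m a^i q^{-i} Q^{-i} [m choose i]_{qt²} (qt²)^{(m+o)i}
  (-qt;qt²)_{m-i} (-t;qt²)_i` as an element of the Laurent polynomial ring. -/
noncomputable def HPL (o : ℤ) (m : ℕ) : LaurentRing :=
  ∑ i ∈ Finset.range (m + 1),
    mon i (-(i : ℤ) + ((m : ℤ) + o) * i) (2 * (((m : ℤ) + o) * i)) (-(i : ℤ)) *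
      qbinom (mon 0 1 2 0) m i *
      (∏ j ∈ Finset.range (m - i), (1 + mon 0 ((j : ℤ) + 1) (2 * j + 1) 0)) *
      (∏ j ∈ Finset.range i, (1 + mon 0 (j : ℤ) (2 * j + 1) 0))

/-- `D_i = 1 + a q^{-i} t^{3-2i} Q^{-1}`. -/
noncomputable def DD (i : ℤ) : LaurentRing := 1 + mon 1 (-i) (3 - 2 * i) (-1)

lemma mon_congr {w x y z w' x' y' z' : ℤ} (h1 : w = w') (h2 : x = x') (h3 : y = y')
    (h4 : z = z') : mon w x y z = mon w' x' y' z' := by subst h1 h2 h3 h4; rfl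

lemma mon_mul (w x y z w' x' y' z' : ℤ) :
    mon w x y z * mon w' x' y' z' = mon (w+w') (x+x') (y+y') (z+z') := by
  simp only [mon, AddMonoidAlgebra.single_mul_single, mul_one, Finsupp.single_add]
  congr 1
  abel

lemma mon_zero : mon 0 0 0 0 = (1 : LaurentRing) := by
  simp [mon, AddMonoidAlgebra.one_def]

lemma mon_pow (w x y z : ℤ) (n : ℕ) :
    mon w x y z ^ n = mon (n*w) (n*x) (n*y) (n*z) := by
  induction n with
  | zero => simpa using mon_zero.symm
  | succ n ih =>
    rw [pow_succ, ih, mon_mul]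
    exact mon_congr (by push_cast; ring) (by push_cast; ring) (by push_cast; ring)
      (by push_cast; ring)

lemma qbinom_zero' {R : Type*} [CommRing R] (s : R) (m : ℕ) : qbinom s m 0 = 1 := by
  cases m <;> rfl

lemma qbinom_succ {R : Type*} [CommRing R] (s : R) (m i : ℕ) :
    qbinom s (m+1) (i+1) = qbinom s m i + s ^ (i + 1) * qbinom s m (i + 1) := rfl

lemma qbinom_eq_zero {R : Type*} [CommRing R] (s : R) : ∀ m i, m < i → qbinom s m i = 0
  | _, 0, h => absurd h (by omega)
  | 0, _+1, _ => rfl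
  | m+1, i+1, h => by
      rw [qbinom_succ, qbinom_eq_zero s m i (by omega), qbinom_eq_zero s m (i+1) (by omega)]
      ring

lemma qbinom_map {R S : Type*} [CommRing R] [CommRing S] (f : R →+* S) (s : R) :
    ∀ m i, f (qbinom s m i) = qbinom (f s) m i
  | _, 0 => by rw [qbinom_zero', qbinom_zero', map_one]
  | 0, _+1 => by show f 0 = 0; exact map_zero f
  | m+1, i+1 => by
      rw [qbinom_succ, qbinom_succ, map_add, map_mul, map_pow,
        qbinom_map f s m i, qbinom_map f s m (i+1)]

lemma key {R : Type*} [CommRing R] (s t : R) (m : ℕ) :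
    ∑ i ∈ range (m+1), (-1:R)^i * (∏ j ∈ range (m-i), (t + s^(j+1))) *
        (∏ j ∈ range i, (1 + s^j * t)) * qbinom s m i
      = ∏ ℓ ∈ range m, (s^(ℓ+1) - 1) := by
  induction m with
  | zero => simp [qbinom_zero']
  | succ m ih =>
    rw [Finset.sum_range_succ']
    have hsplit : ∀ i ∈ range (m+1),
        (-1:R)^(i+1) * (∏ j ∈ range (m+1-(i+1)), (t + s^(j+1))) *
          (∏ j ∈ range (i+1), (1 + s^j * t)) * qbinom s (m+1) (i+1)
        = ((-1:R)^(i+1) * (∏ j ∈ range (m-i), (t + s^(j+1))) *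
            (∏ j ∈ range (i+1), (1 + s^j * t)) * qbinom s m i)
          + ((-1:R)^(i+1) * (∏ j ∈ range (m-i), (t + s^(j+1))) *
            (∏ j ∈ range (i+1), (1 + s^j * t)) * (s^(i+1) * qbinom s m (i+1))) := by
      intro i hi
      have h1 : m + 1 - (i+1) = m - i := by omega
      rw [h1, qbinom_succ]; ring
    rw [Finset.sum_congr rfl hsplit, Finset.sum_add_distrib]
    have hv : ∑ i ∈ range (m+1), ((-1:R)^(i+1) * (∏ j ∈ range (m-i), (t + s^(j+1))) *
            (∏ j ∈ range (i+1), (1 + s^j * t)) * (s^(i+1) * qbinom s m (i+1)))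
          + ((-1:R)^0 * (∏ j ∈ range (m+1-0), (t + s^(j+1))) *
            (∏ j ∈ range 0, (1 + s^j * t)) * qbinom s (m+1) 0)
        = ∑ i ∈ range (m+1), ((-1:R)^i * s^i * (∏ j ∈ range (m+1-i), (t + s^(j+1))) *
            (∏ j ∈ range i, (1 + s^j * t)) * qbinom s m i) := by
      rw [Finset.sum_range_succ' (fun i => (-1:R)^i * s^i * (∏ j ∈ range (m+1-i), (t + s^(j+1))) *
            (∏ j ∈ range i, (1 + s^j * t)) * qbinom s m i)]
      rw [Finset.sum_range_succ]
      rw [qbinom_eq_zero s m (m+1) (by omega)]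
      simp only [qbinom_zero']
      have : ∀ i ∈ range m, ((-1:R)^(i+1) * (∏ j ∈ range (m-i), (t + s^(j+1))) *
            (∏ j ∈ range (i+1), (1 + s^j * t)) * (s^(i+1) * qbinom s m (i+1)))
          = ((-1:R)^(i+1) * s^(i+1) * (∏ j ∈ range (m+1-(i+1)), (t + s^(j+1))) *
            (∏ j ∈ range (i+1), (1 + s^j * t)) * qbinom s m (i+1)) := by
        intro i hi
        have h1 : m + 1 - (i+1) = m - i := by omega
        rw [h1]; ring
      rw [Finset.sum_congr rfl this]
      ring
    rw [add_assoc, hv, ← Finset.sum_add_distrib]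
    have hmerge : ∀ i ∈ range (m+1),
        ((-1:R)^(i+1) * (∏ j ∈ range (m-i), (t + s^(j+1))) *
            (∏ j ∈ range (i+1), (1 + s^j * t)) * qbinom s m i)
          + ((-1:R)^i * s^i * (∏ j ∈ range (m+1-i), (t + s^(j+1))) *
            (∏ j ∈ range i, (1 + s^j * t)) * qbinom s m i)
        = (s^(m+1) - 1) * ((-1:R)^i * (∏ j ∈ range (m-i), (t + s^(j+1))) *
            (∏ j ∈ range i, (1 + s^j * t)) * qbinom s m i) := by
      intro i hi
      simp only [mem_range] at hi
      have h1 : m + 1 - i = (m - i) + 1 := by omega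
      rw [h1, Finset.prod_range_succ, Finset.prod_range_succ]
      have h3 : s^i * s^(m-i+1) = s^(m+1) := by
        rw [← pow_add]; congr 1; omega
      rw [← h3]; ring
    rw [Finset.sum_congr rfl hmerge, ← Finset.mul_sum, ih, Finset.prod_range_succ]
    ring

lemma sum_id_two (m : ℕ) : 2 * ∑ ℓ ∈ range m, (ℓ+1) = m*(m+1) := by
  induction m with
  | zero => rfl
  | succ m ih => rw [Finset.sum_range_succ, Nat.mul_add, ih]; ring

lemma sum_id_succ (m : ℕ) : ∑ ℓ ∈ range m, (ℓ+1) = m*(m+1)/2 := by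
  rw [← sum_id_two m, Nat.mul_div_cancel_left _ (by norm_num)]

lemma key2 {R : Type*} [CommRing R] (S S' T T' : R) (hS : S*S'=1) (hT : T*T'=1) (m : ℕ) :
    ∑ i ∈ range (m+1), (-1:R)^i * T^i * qbinom S m i *
        (∏ j ∈ range (m-i), (1 + S^(j+1)*T)) * (∏ j ∈ range i, (1 + S^j * T'))
      = S^(m*(m+1)/2) * T^m * ∏ ℓ ∈ range m, (1 - S'^(ℓ+1)) := by
  have hL : ∀ i ∈ range (m+1),
      (-1:R)^i * T^i * qbinom S m i *
        (∏ j ∈ range (m-i), (1 + S^(j+1)*T)) * (∏ j ∈ range i, (1 + S^j * T'))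
      = T^m * ((-1:R)^i * (∏ j ∈ range (m-i), (T' + S^(j+1))) *
          (∏ j ∈ range i, (1 + S^j * T')) * qbinom S m i) := by
    intro i hi
    simp only [mem_range] at hi
    have h1 : (∏ j ∈ range (m-i), (1 + S^(j+1)*T))
        = T^(m-i) * ∏ j ∈ range (m-i), (T' + S^(j+1)) := by
      have h0 : (∏ j ∈ range (m-i), (1 + S^(j+1)*T))
          = ∏ j ∈ range (m-i), (T * (T' + S^(j+1))) :=
        Finset.prod_congr rfl fun j _ => by rw [mul_add, hT]; ring
      rw [h0, Finset.prod_mul_distrib, Finset.prod_const, Finset.card_range]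
    rw [h1]
    have h2 : T^i * T^(m-i) = T^m := by rw [← pow_add]; congr 1; omega
    rw [← h2]; ring
  rw [Finset.sum_congr rfl hL, ← Finset.mul_sum, key S T' m]
  have h3 : S^(m*(m+1)/2) = ∏ ℓ ∈ range m, S^(ℓ+1) := by
    rw [Finset.prod_pow_eq_pow_sum, sum_id_succ]
  rw [h3, mul_comm (∏ ℓ ∈ range m, S^(ℓ+1)) (T^m), mul_assoc, ← Finset.prod_mul_distrib]
  congr 1
  refine Finset.prod_congr rfl fun ℓ _ => ?_
  rw [mul_sub, mul_one, ← mul_pow, hS, one_pow]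

/-- `HP(q;o)_m ≡ q^{m(m+1)/2} t^{m²} Π_{ℓ=1}^m D_{1+ℓ-m-o} (mod D_{1-m-o})` in the
Laurent polynomial ring. -/
theorem HP_mod_second_differential (o : ℤ) (m : ℕ) :
    DD (1 - (m : ℤ) - o) ∣
      HPL o m -
        mon 0 ((m * (m + 1) / 2 : ℕ) : ℤ) ((m ^ 2 : ℕ) : ℤ) 0 *
          ∏ ℓ ∈ Finset.Icc 1 m, DD (1 + (ℓ : ℤ) - m - o) := by
  -- abbreviations (not using `set` to keep control)
  have hHPL : HPL o m = ∑ i ∈ range (m+1),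
      (mon 1 ((m:ℤ)+o-1) (2*(m:ℤ)+2*o+1) (-1))^i * ((mon 0 0 (-1) 0)^i *
        qbinom (mon 0 1 2 0) m i *
        (∏ j ∈ range (m-i), (1 + (mon 0 1 2 0)^(j+1) * mon 0 0 (-1) 0)) *
        (∏ j ∈ range i, (1 + (mon 0 1 2 0)^j * mon 0 0 1 0))) := by
    rw [HPL]
    refine Finset.sum_congr rfl fun i _ => ?_
    have e1 : mon i (-(i : ℤ) + ((m : ℤ) + o) * i) (2 * (((m : ℤ) + o) * i)) (-(i : ℤ))
        = (mon 1 ((m:ℤ)+o-1) (2*(m:ℤ)+2*o+1) (-1))^i * (mon 0 0 (-1) 0)^i := by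
      rw [mon_pow, mon_pow, mon_mul]
      exact mon_congr (by ring) (by ring) (by ring) (by ring)
    have e2 : (∏ j ∈ range (m-i), (1 + mon 0 ((j : ℤ) + 1) (2 * j + 1) 0))
        = ∏ j ∈ range (m-i), (1 + (mon 0 1 2 0)^(j+1) * mon 0 0 (-1) 0) := by
      refine Finset.prod_congr rfl fun j _ => ?_
      rw [mon_pow, mon_mul]
      exact congrArg (1 + ·) (mon_congr (by ring) (by push_cast; ring) (by push_cast; ring)
        (by ring))
    have e3 : (∏ j ∈ range i, (1 + mon 0 (j : ℤ) (2 * j + 1) 0))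
        = ∏ j ∈ range i, (1 + (mon 0 1 2 0)^j * mon 0 0 1 0) := by
      refine Finset.prod_congr rfl fun j _ => ?_
      rw [mon_pow, mon_mul]
      exact congrArg (1 + ·) (mon_congr (by ring) (by push_cast; ring) (by push_cast; ring)
        (by ring))
    rw [e1, e2, e3]; ring
  have hK : mon 0 ((m * (m + 1) / 2 : ℕ) : ℤ) ((m ^ 2 : ℕ) : ℤ) 0
      = (mon 0 1 2 0)^(m*(m+1)/2) * (mon 0 0 (-1) 0)^m := by
    have h2 : ((m*(m+1)/2 : ℕ) : ℤ) * 2 = (m:ℤ)*((m:ℤ)+1) := by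
      have := Nat.div_mul_cancel (Nat.even_mul_succ_self m).two_dvd
      exact_mod_cast this
    rw [mon_pow, mon_pow, mon_mul]
    refine mon_congr (by ring) (by ring) ?_ (by ring)
    rw [show ((m^2:ℕ) : ℤ) = (m:ℤ)*(m:ℤ) from by push_cast; ring]
    linear_combination -h2
  have hProd : (∏ ℓ ∈ Finset.Icc 1 m, DD (1 + (ℓ:ℤ) - m - o))
      = ∏ ℓ ∈ Finset.Icc 1 m,
          (1 + (mon 1 ((m:ℤ)+o-1) (2*(m:ℤ)+2*o+1) (-1)) * (mon 0 (-1) (-2) 0)^ℓ) := by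
    refine Finset.prod_congr rfl fun ℓ _ => ?_
    rw [DD, mon_pow, mon_mul]
    exact congrArg (1 + ·) (mon_congr (by ring) (by push_cast; ring) (by push_cast; ring)
      (by ring))
  have hD : DD (1 - (m:ℤ) - o) = 1 + mon 1 ((m:ℤ)+o-1) (2*(m:ℤ)+2*o+1) (-1) := by
    rw [DD]
    exact congrArg (1 + ·) (mon_congr (by ring) (by ring) (by ring) (by ring))
  rw [← Ideal.mem_span_singleton, ← Ideal.Quotient.eq_zero_iff_mem, map_sub, sub_eq_zero]
  set I := Ideal.span {DD (1 - (m:ℤ) - o)} with hI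
  set φ := Ideal.Quotient.mk I with hφ
  have hu : φ (mon 1 ((m:ℤ)+o-1) (2*(m:ℤ)+2*o+1) (-1)) = -1 := by
    have h0 : φ (DD (1 - (m:ℤ) - o)) = 0 :=
      Ideal.Quotient.eq_zero_iff_mem.2 (Ideal.mem_span_singleton_self _)
    rw [hD, map_add, map_one] at h0
    exact eq_neg_of_add_eq_zero_right h0
  have hST : φ (mon 0 1 2 0) * φ (mon 0 (-1) (-2) 0) = 1 := by
    rw [← map_mul, mon_mul]
    norm_num
    rw [mon_zero, map_one]
  have hTT : φ (mon 0 0 (-1) 0) * φ (mon 0 0 1 0) = 1 := by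
    rw [← map_mul, mon_mul]
    norm_num
    rw [mon_zero, map_one]
  have hmain := key2 (φ (mon 0 1 2 0)) (φ (mon 0 (-1) (-2) 0)) (φ (mon 0 0 (-1) 0))
    (φ (mon 0 0 1 0)) hST hTT m
  have hIcc : ∀ (X : LaurentRing ⧸ I), ∏ ℓ ∈ Finset.Icc 1 m, (1 + (-1) * X^ℓ)
      = ∏ ℓ ∈ range m, (1 - X^(ℓ+1)) := by
    intro X
    rw [← Finset.Ico_add_one_right_eq_Icc, Finset.prod_Ico_eq_prod_range]
    norm_num
    exact Finset.prod_congr rfl fun ℓ _ => by rw [Nat.add_comm 1 ℓ]; ring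
  rw [hHPL, hK, hProd]
  simp only [map_sum, map_mul, map_pow, map_prod, map_add, map_one, hu, qbinom_map]
  rw [hIcc, ← hmain]
  exact Finset.sum_congr rfl fun i _ => by ring
end
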